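/- For every n ≥ 0, every staircase tableau g ∈ ST(n+1), and every family of bits ξ = (ξ_{i,j})_{(i,j) ∈ I_{n−1}} with values in {0,1}, the output A'(g, ξ) of the time-reversed half-hexagon domino shuffle is a staircase tableau of order n, i.e. A'(g, ξ) ∈ ST(n). -/
import Mathlib


/-- `g` is a staircase tableau of order `n`: a triangular array `(g i j)_{0 ≤ j ≤ i ≤ n}`
of positive integers satisfying the interlacing conditions
`g i j ≤ g (i-1) j < g i (j+1)` for `1 ≤ i ≤ n`, `0 ≤ j ≤ i-1`, with fixed bottom row
`g n j = 2j + 1`.  (Entries outside the triangle are normalized to `0`.) -/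
def IsStaircaseTableau (n : ℕ) (g : ℕ → ℕ → ℕ) : Prop :=
  (∀ i j, j ≤ i → i ≤ n → 1 ≤ g i j) ∧
  (∀ i j, 1 ≤ i → i ≤ n → j ≤ i - 1 →
    g i j ≤ g (i - 1) j ∧ g (i - 1) j < g i (j + 1)) ∧
  (∀ j, j ≤ n → g n j = 2 * j + 1) ∧
  (∀ i j, ¬(j ≤ i ∧ i ≤ n) → g i j = 0)

/-- One row of the time-reversed half-hexagon domino shuffle: given the input tableau
`g`, the bits `ξ`, and the already-computed output row `prev` (row `i + 1`), compute
entry `j` of output row `i`. -/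
def revRow (g : ℕ → ℕ → ℕ) (ξ : ℕ → ℕ → Bool) (prev : ℕ → ℕ) (i j : ℕ) : ℕ :=
  if g i j = prev j then g i j
  else if g i j = prev (j + 1) then g i j - 1
  else g i j - (if ξ i j then 1 else 0)

/-- The output rows of the time-reversed half-hexagon shuffle, computed bottom-up:
`revRows n g ξ k` is output row `n - k`. -/
def revRows (n : ℕ) (g : ℕ → ℕ → ℕ) (ξ : ℕ → ℕ → Bool) : ℕ → ℕ → ℕ
  | 0 => fun j => 2 * j + 1
  | k + 1 => revRow g ξ (revRows n g ξ k) (n - (k + 1))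

/-- The time-reversed half-hexagon domino shuffle `A'(g, ξ)`: from a staircase tableau
`g` of order `n + 1` and bits `ξ`, produce a triangular array of order `n` by first
setting row `n` to `h n j = 2j + 1` and then processing rows `i = n-1, …, 0` bottom-up
(entry `j` of row `i` is `g i j` if `g i j = h (i+1) j`; else `g i j - 1` if
`g i j = h (i+1) (j+1)`; else `g i j - ξ i j`).
(Entries outside the triangle are normalized to `0`.) -/
def HHRevShuffle (n : ℕ) (g : ℕ → ℕ → ℕ) (ξ : ℕ → ℕ → Bool) : ℕ → ℕ → ℕ :=
  fun i j => if j ≤ i ∧ i ≤ n then revRows n g ξ (n - i) j else 0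

lemma hh_key (n : ℕ) (g : ℕ → ℕ → ℕ) (hg : IsStaircaseTableau (n + 1) g)
    (ξ : ℕ → ℕ → Bool) :
    ∀ k, k ≤ n →
      (∀ j, j ≤ n - k → 1 ≤ revRows n g ξ k j ∧ revRows n g ξ k j ≤ g (n - k) j ∧
        g (n - k) j ≤ revRows n g ξ k j + 1) ∧
      (∀ j, j + 1 ≤ n - k → revRows n g ξ k j < revRows n g ξ k (j + 1)) ∧
      (∀ j, 1 ≤ k → j ≤ n - k →
        revRows n g ξ (k - 1) j ≤ revRows n g ξ k j ∧
        revRows n g ξ k j < revRows n g ξ (k - 1) (j + 1)) := by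
  obtain ⟨hpos, hint, hbot, _⟩ := hg
  intro k
  induction k with
  | zero =>
    intro _
    refine ⟨?_, ?_, ?_⟩
    · intro j hj
      have h1 := hint (n + 1) j (by omega) (by omega) (by simpa using hj)
      have h2 := hbot j (by omega)
      have h3 := hbot (j + 1) (by omega)
      simp only [Nat.add_sub_cancel] at h1
      simp only [Nat.sub_zero]
      simp only [revRows]
      omega
    · intro j _
      simp only [revRows]; omega
    · intro j hk _; omega
  | succ k IH =>
    intro hk1
    have hk : k ≤ n := by omega
    obtain ⟨IH1, IH2, _⟩ := IH hk
    set i := n - (k + 1) with hi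
    have hnk : n - k = i + 1 := by omega
    have core : ∀ j, j ≤ i →
        revRows n g ξ k j ≤ revRow g ξ (revRows n g ξ k) i j ∧
        revRow g ξ (revRows n g ξ k) i j < revRows n g ξ k (j + 1) ∧
        revRow g ξ (revRows n g ξ k) i j ≤ g i j ∧
        g i j ≤ revRow g ξ (revRows n g ξ k) i j + 1 ∧
        1 ≤ revRows n g ξ k j := by
      intro j hj
      have h1 := hint (i + 1) j (by omega) (by omega) (by simpa using hj)
      simp only [Nat.add_sub_cancel] at h1
      have hp1 := IH1 j (by omega)
      have hp2 := IH1 (j + 1) (by omega)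
      rw [hnk] at hp1 hp2
      have hmono := IH2 j (by omega)
      unfold revRow
      split_ifs <;> omega
    have hrow : ∀ j, revRows n g ξ (k + 1) j = revRow g ξ (revRows n g ξ k) i j := by
      intro j; simp only [revRows, hi]
    refine ⟨?_, ?_, ?_⟩
    · intro j hj
      rw [hrow]
      have := core j hj
      omega
    · intro j hj
      rw [hrow, hrow]
      have h1 := core j (by omega)
      have h2 := core (j + 1) (by omega)
      omega
    · intro j _ hj
      have := core j hj
      simp only [Nat.add_sub_cancel, hrow]
      omega

/-- For every staircase tableau `g` of order `n + 1` and every family of bits `ξ`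
(indexed by `I_{n-1} = {(i,j) : 0 ≤ j ≤ i ≤ n-1}`), the output of the time-reversed
half-hexagon domino shuffle is a staircase tableau of order `n`. -/
theorem stmt8 (n : ℕ) (g : ℕ → ℕ → ℕ) (hg : IsStaircaseTableau (n + 1) g)
    (ξ : ℕ → ℕ → Bool) : IsStaircaseTableau n (HHRevShuffle n g ξ) := by
  refine ⟨?_, ?_, ?_, ?_⟩
  · intro i j hji hin
    have h := (hh_key n g hg ξ (n - i) (by omega)).1 j (by omega)
    simp only [HHRevShuffle, if_pos (And.intro hji hin)]
    omega
  · intro i j h1i hin hj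
    have hji : j ≤ i - 1 := hj
    have hkey := (hh_key n g hg ξ (n - (i - 1)) (by omega)).2.2 j (by omega) (by omega)
    have hk1 : n - (i - 1) - 1 = n - i := by omega
    rw [hk1] at hkey
    simp only [HHRevShuffle, if_pos (And.intro (show j ≤ i by omega) hin),
      if_pos (And.intro (show j ≤ i - 1 by omega) (show i - 1 ≤ n by omega)),
      if_pos (And.intro (show j + 1 ≤ i by omega) hin)]
    exact hkey
  · intro j hj
    simp only [HHRevShuffle, if_pos (And.intro hj (le_refl n)), Nat.sub_self, revRows]
  · intro i j h
    simp only [HHRevShuffle, if_neg h]
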